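/- arXiv:0808.3522 — 6 statements merged into one kernel-verified Lean document; each statement's English description precedes it below -/
import Mathlib

section
/- Let (W,S) be a Coxeter system and φ : W → Γ a weight function with values in an abelian group Γ. Then there exists a unique group homomorphism φ̄ : ℤ[S̄] → Γ such that φ = φ̄ ∘ 𝓵, where 𝓵 : W → ℤ[S̄] is the universal weight function. Consequently there are canonical bijections between the set of weight functions W → Γ, the set of maps S̄ → Γ, and the set of group homomorphisms ℤ[S̄] → Γ. -/
open CoxeterSystem Classical

/-!
Along a reduced word a weight function is additive, so it is the sum of its values on the
letters; and it takes the same value on conjugate simple reflections. Hence `φ(s_i)` only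
depends on the class of `i` in `S̄`, which defines `φ̄` on the basis of `ℤ[S̄]`. The same
additivity applied to `𝓵` gives `𝓵(s_i) = ⟦i⟧`, so the image of `𝓵` generates `ℤ[S̄]` and
`φ̄` is unique.
-/

theorem Finsupp.list_sum_map_single_one_apply {α β : Type*} [DecidableEq β] (f : α → β)
    (l : List α) (b : β) :
    (l.map fun a => Finsupp.single (f a) (1 : ℤ)).sum b = (l.filter fun a => f a = b).length := by
  induction l with
  | nil => simp
  | cons a l ih =>
    rw [List.map_cons, List.sum_cons, Finsupp.add_apply, ih, List.filter_cons,
      Finsupp.single_apply]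
    split_ifs <;> simp_all [add_comm]

namespace CoxeterSystem

variable {B W Γ : Type*} [Group W] {M : CoxeterMatrix B} (cs : CoxeterSystem M W)

def IsWeightFunction [Add Γ] (φ : W → Γ) : Prop :=
  ∀ w w' : W, cs.length (w * w') = cs.length w + cs.length w' → φ (w * w') = φ w + φ w'

namespace IsWeightFunction

variable {cs} [AddCancelCommMonoid Γ] {φ : W → Γ} (hφ : cs.IsWeightFunction φ)
include hφ

theorem map_one : φ 1 = 0 := by
  simpa using hφ 1 1 (by simp)

theorem map_wordProd_of_isReduced {l : List B} (hl : cs.IsReduced l) :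
    φ (cs.wordProd l) = (l.map (φ ∘ cs.simple)).sum := by
  induction l with
  | nil => simpa using hφ.map_one
  | cons i l ih =>
    have hl' : cs.IsReduced l := by simpa using hl.drop 1
    have hlen : cs.length (cs.simple i * cs.wordProd l)
        = cs.length (cs.simple i) + cs.length (cs.wordProd l) := by
      rw [← wordProd_cons, hl, hl', length_simple, List.length_cons, add_comm]
    rw [wordProd_cons, hφ _ _ hlen, ih hl', List.map_cons, List.sum_cons, Function.comp_apply]

/-- If `c s_i = s_j c` then either `ℓ(c s_i) = ℓ(c) + 1`, and comparing `φ(c s_i)` with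
`φ(s_j c)` gives the claim, or `c s_i` is a shorter element with the same property. -/
theorem map_simple_eq_of_mul_simple_eq {i j : B} (c : W)
    (hc : c * cs.simple i = cs.simple j * c) : φ (cs.simple i) = φ (cs.simple j) := by
  induction hn : cs.length c using Nat.strong_induction_on generalizing c with
  | _ n ih =>
    rcases cs.length_mul_simple c i with hlen | hlen
    · have hright := hφ _ _ (by rw [hlen, length_simple])
      have hleft := hφ (cs.simple j) c (by rw [← hc, hlen, length_simple, add_comm])
      rw [hc, hleft, add_comm] at hright
      exact (add_left_cancel hright).symm
    · refine ih _ (by omega) (c * cs.simple i) ?_ rfl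
      rw [mul_assoc, simple_mul_simple_self, mul_one, hc, ← mul_assoc, simple_mul_simple_self,
        one_mul]

theorem map_simple_eq_of_isConj {i j : B} (h : IsConj (cs.simple i) (cs.simple j)) :
    φ (cs.simple i) = φ (cs.simple j) :=
  let ⟨c, hc⟩ := h
  hφ.map_simple_eq_of_mul_simple_eq c hc

end IsWeightFunction

section UniversalWeightFunction

variable {cs} {r : Setoid B} {bl : W → Quotient r →₀ ℤ}
  (hbl : ∀ l : List B, cs.IsReduced l →
    bl (cs.wordProd l) = (l.map fun i => Finsupp.single (Quotient.mk r i) 1).sum)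
include hbl

theorem apply_simple_eq_single (i : B) :
    bl (cs.simple i) = Finsupp.single (Quotient.mk r i) 1 := by
  simpa using hbl [i] (by simp [IsReduced, length_simple])

theorem addMonoidHom_ext_of_comp_eq [AddMonoid Γ] {ψ₁ ψ₂ : (Quotient r →₀ ℤ) →+ Γ}
    (h : ∀ w, ψ₁ (bl w) = ψ₂ (bl w)) : ψ₁ = ψ₂ :=
  Finsupp.addHom_ext' fun ω => AddMonoidHom.ext_int <| Quotient.inductionOn ω fun i => by
    simpa only [apply_simple_eq_single hbl, AddMonoidHom.comp_apply, Finsupp.singleAddHom_apply]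
      using h (cs.simple i)

theorem IsWeightFunction.exists_addMonoidHom_comp_eq [AddCommGroup Γ] {φ : W → Γ}
    (hφ : cs.IsWeightFunction φ)
    (hr : ∀ i j : B, r.r i j ↔ IsConj (cs.simple i) (cs.simple j)) :
    ∃ ψ : (Quotient r →₀ ℤ) →+ Γ, ∀ w, ψ (bl w) = φ w := by
  let g : Quotient r → Γ := Quotient.lift (φ ∘ cs.simple) fun i j hij =>
    hφ.map_simple_eq_of_isConj ((hr i j).1 hij)
  refine ⟨(Finsupp.linearCombination ℤ g).toAddMonoidHom, fun w => ?_⟩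
  obtain ⟨l, hl, rfl⟩ := cs.exists_isReduced w
  simp [hbl l hl, map_list_sum, hφ.map_wordProd_of_isReduced hl, g, Function.comp_def]

end UniversalWeightFunction

end CoxeterSystem

/-- Given a weight function `φ : W → Γ`, there is a unique group homomorphism
`φ̄ : ℤ[S̄] → Γ` with `φ = φ̄ ∘ 𝓵`, where `𝓵 : W → ℤ[S̄] = (S̄ →₀ ℤ)` is the
universal weight function `𝓵(w) = Σ_ω ℓ_ω(w)·ω`.  Consequently weight functions
`W → Γ` correspond bijectively to homomorphisms `ℤ[S̄] → Γ` (and to maps `S̄ → Γ`). -/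
theorem stmt1 {B W Γ : Type*} [Group W] [AddCommGroup Γ]
    {M : CoxeterMatrix B} (cs : CoxeterSystem M W)
    (r : Setoid B) (hr : ∀ i j : B, r.r i j ↔ IsConj (cs.simple i) (cs.simple j))
    (ℓc : Quotient r → W → ℕ)
    (hℓc : ∀ (w : W) (l : List B), cs.wordProd l = w → cs.IsReduced l →
      ∀ ω : Quotient r, ℓc ω w = (l.filter (fun i => decide (Quotient.mk r i = ω))).length)
    (bl : W → (Quotient r →₀ ℤ))
    (hbl : ∀ (w : W) (ω : Quotient r), bl w ω = (ℓc ω w : ℤ))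
    (φ : W → Γ)
    (hφ : ∀ w w' : W, cs.length (w * w') = cs.length w + cs.length w' →
      φ (w * w') = φ w + φ w') :
    ∃! φbar : (Quotient r →₀ ℤ) →+ Γ, ∀ w : W, φbar (bl w) = φ w := by
  have hbl_reduced : ∀ l : List B, cs.IsReduced l →
      bl (cs.wordProd l) = (l.map fun i => Finsupp.single (Quotient.mk r i) 1).sum :=
    fun l hl => Finsupp.ext fun ω => by
      rw [hbl, hℓc _ l rfl hl, Finsupp.list_sum_map_single_one_apply]
  obtain ⟨φbar, hφbar⟩ := IsWeightFunction.exists_addMonoidHom_comp_eq hbl_reduced hφ hr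
  exact ⟨φbar, hφbar, fun ψ hψ =>
    addMonoidHom_ext_of_comp_eq hbl_reduced fun w => (hψ w).trans (hφbar w).symm⟩
end

section
/- Let (W,S) be a Coxeter system and S = S₊ ∪ S₋ a partition such that no element of S₊ is W-conjugate to an element of S₋. Let φ be a weight function with values in a totally ordered abelian group Γ, and let φ' be the weight function with φ'(s̄) = φ(s̄) for s ∈ S₊ and φ'(s̄) = −φ(s̄) for s ∈ S₋. Then the unique ℤ[Γ]-linear map θ : H(W,S,φ) → H(W,S,φ') sending T_w^φ to (−1)^{ℓ₋(w)} T_w^{φ'} is a ℤ[Γ]-algebra isomorphism, where ℓ₋(w) = Σ_{ω ⊆ S₋-classes} ℓ_ω(w). -/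
/-!
`θ` is bijective because it rescales a basis by signs. Since `T_w = T_s T_u` whenever
`w = su` with `ℓ(w) = ℓ(u) + 1`, induction on length reduces multiplicativity to
`θ(T_s T_u) = θ(T_s) θ(T_u)`. If `ℓ(su) > ℓ(u)` this is the additivity of `ℓ₋` on reduced
products. Otherwise the quadratic relation gives `T_s T_u = (e^{φ(s)} - e^{-φ(s)}) T_u + T_{su}`,
and the sign `(-1)^{ℓ₋(s)}` that relates `e^{φ'(s)} - e^{-φ'(s)}` to `e^{φ(s)} - e^{-φ(s)}`
is exactly the discrepancy between `(-1)^{ℓ₋(s) + ℓ₋(u)}` and `(-1)^{ℓ₋(u)}`.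
-/

open Finsupp

noncomputable section

/-- `e^γ` in the group algebra `ℤ[Γ]`. -/
def expG {Γ : Type*} [AddCommGroup Γ] (γ : Γ) : AddMonoidAlgebra ℤ Γ :=
  AddMonoidAlgebra.single γ 1

/-- `A` is a Hecke algebra for `(W,S,φ)`: a `ℤ[Γ]`-algebra, free with basis
`(T_w)_{w ∈ W}`, with `T_w T_{w'} = T_{ww'}` when lengths add, `T_1 = 1`, and the
quadratic relations `(T_s − e^{φ(s)})(T_s + e^{−φ(s)}) = 0`. -/
structure IsHeckeAlgebra {B W Γ : Type*} [Group W] [AddCommGroup Γ]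
    {M : CoxeterMatrix B} (cs : CoxeterSystem M W) (φ : B → Γ)
    {A : Type*} [Ring A] [Algebra (AddMonoidAlgebra ℤ Γ) A]
    (T : Module.Basis W (AddMonoidAlgebra ℤ Γ) A) : Prop where
  one : T 1 = 1
  mul_of_length_add : ∀ w w' : W,
    cs.length (w * w') = cs.length w + cs.length w' → T w * T w' = T (w * w')
  quadratic : ∀ i : B,
    (T (cs.simple i) - algebraMap (AddMonoidAlgebra ℤ Γ) A (expG (φ i))) *
      (T (cs.simple i) + algebraMap (AddMonoidAlgebra ℤ Γ) A (expG (-φ i))) = 0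

lemma expG_add {Γ : Type*} [AddCommGroup Γ] (γ δ : Γ) : expG (γ + δ) = expG γ * expG δ := by
  simp [expG, AddMonoidAlgebra.single_mul_single]

lemma expG_sub_expG_neg_zsmul_neg_one_pow {Γ : Type*} [AddCommGroup Γ] (n : ℕ) (γ : Γ) :
    expG ((-1 : ℤ) ^ n • γ) - expG (-((-1 : ℤ) ^ n • γ)) = (-1 : ℤ) ^ n • (expG γ - expG (-γ)) := by
  rcases n.even_or_odd with hn | hn <;> simp [hn.neg_one_pow]

namespace Module.Basis

variable {ι R M M' : Type*} [Ring R] [AddCommGroup M] [Module R M] [AddCommGroup M'] [Module R M']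

theorem bijective_of_apply_eq_units_zsmul (b : Basis ι R M) (b' : Basis ι R M')
    (f : M →ₗ[R] M') (c : ι → ℤˣ) (h : ∀ i, f (b i) = (c i : ℤ) • b' i) :
    Function.Bijective f := by
  let b'' := b'.unitsSMul fun i => Units.map (Int.castRingHom R).toMonoidHom (c i)
  have hf : f = (b.equiv b'' (Equiv.refl ι)).toLinearMap :=
    b.ext fun i => by simp [b'', h, Basis.unitsSMul_apply, Units.smul_def, Int.cast_smul_eq_zsmul]
  exact hf ▸ (b.equiv b'' (Equiv.refl ι)).bijective

end Module.Basis

namespace CoxeterSystem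

variable {B W : Type*} [Group W] {M : CoxeterMatrix B}

def CountsLetters (cs : CoxeterSystem M W) (Q : B → Prop) [DecidablePred Q] (ℓ : W → ℕ) :
    Prop :=
  ∀ (w : W) (l : List B), cs.wordProd l = w → cs.IsReduced l →
    ℓ w = (l.filter (fun i => decide (Q i))).length

variable {cs : CoxeterSystem M W} {Q : B → Prop} [DecidablePred Q] {ℓ : W → ℕ}

theorem CountsLetters.map_one (hℓ : cs.CountsLetters Q ℓ) : ℓ 1 = 0 := by
  simpa using hℓ 1 [] cs.wordProd_nil (by simp [IsReduced])

theorem CountsLetters.apply_simple (hℓ : cs.CountsLetters Q ℓ) (i : B) :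
    ℓ (cs.simple i) = if Q i then 1 else 0 := by
  have h := hℓ (cs.simple i) [i] (by simp) (by simp [IsReduced])
  by_cases hQ : Q i <;> simp [hQ] at h ⊢ <;> exact h

theorem CountsLetters.apply_simple_mul (hℓ : cs.CountsLetters Q ℓ) {i : B} {u : W}
    (hlen : cs.length (cs.simple i * u) = cs.length u + 1) :
    ℓ (cs.simple i * u) = ℓ (cs.simple i) + ℓ u := by
  obtain ⟨l, hl, rfl⟩ := cs.exists_isReduced u
  have hil : cs.IsReduced (i :: l) := by
    unfold IsReduced at hl ⊢
    rw [cs.wordProd_cons, hlen, hl, List.length_cons]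
  rw [← cs.wordProd_cons, hℓ _ _ rfl hil, hℓ _ _ rfl hl, hℓ.apply_simple]
  by_cases hQ : Q i <;> simp [hQ]; omega

end CoxeterSystem

namespace IsHeckeAlgebra

variable {B W Γ : Type*} [Group W] [AddCommGroup Γ]
    {M : CoxeterMatrix B} {cs : CoxeterSystem M W} {φ : B → Γ}
    {A : Type*} [Ring A] [Algebra (AddMonoidAlgebra ℤ Γ) A]
    {T : Module.Basis W (AddMonoidAlgebra ℤ Γ) A}

theorem simple_mul_of_length_succ (hA : IsHeckeAlgebra cs φ T) {i : B} {u : W}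
    (hlen : cs.length (cs.simple i * u) = cs.length u + 1) :
    T (cs.simple i) * T u = T (cs.simple i * u) :=
  hA.mul_of_length_add _ _ (by rw [hlen, cs.length_simple, add_comm])

theorem simple_mul_simple (hA : IsHeckeAlgebra cs φ T) (i : B) :
    T (cs.simple i) * T (cs.simple i) = (expG (φ i) - expG (-φ i)) • T (cs.simple i) + 1 := by
  set c := algebraMap (AddMonoidAlgebra ℤ Γ) A (expG (φ i))
  set c' := algebraMap (AddMonoidAlgebra ℤ Γ) A (expG (-φ i))
  have hcc' : c * c' = 1 := by
    rw [← map_mul, ← expG_add, add_neg_cancel]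
    exact map_one _
  have hc'T : T (cs.simple i) * c' = c' * T (cs.simple i) := (Algebra.commutes _ _).symm
  have hq := hA.quadratic i
  rw [sub_mul, mul_add, mul_add, hc'T, hcc'] at hq
  rw [Algebra.smul_def, map_sub, sub_mul, ← sub_eq_zero, ← hq]
  abel

theorem simple_mul_of_length_pred (hA : IsHeckeAlgebra cs φ T) {i : B} {u : W}
    (hlen : cs.length (cs.simple i * u) + 1 = cs.length u) :
    T (cs.simple i) * T u = (expG (φ i) - expG (-φ i)) • T u + T (cs.simple i * u) := by
  set u' := cs.simple i * u
  have hu : cs.simple i * u' = u := by simp [u']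
  have hTu : T (cs.simple i) * T u' = T u :=
    hu ▸ hA.simple_mul_of_length_succ (by rw [hu]; omega)
  rw [← hTu, ← mul_assoc, hA.simple_mul_simple, add_mul, one_mul, smul_mul_assoc]

variable {A' : Type*} [Ring A'] [Algebra (AddMonoidAlgebra ℤ Γ) A']

theorem map_mul_of_map_simple_mul (hA : IsHeckeAlgebra cs φ T)
    {θ : A →ₗ[AddMonoidAlgebra ℤ Γ] A'} (hone : θ 1 = 1)
    (hsimple : ∀ i u, θ (T (cs.simple i) * T u) = θ (T (cs.simple i)) * θ (T u)) (x y : A) :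
    θ (x * y) = θ x * θ y := by
  have hsimple' : ∀ i x, θ (T (cs.simple i) * x) = θ (T (cs.simple i)) * θ x := fun i =>
    LinearMap.congr_fun (T.ext (f₁ := θ ∘ₗ LinearMap.mulLeft _ (T (cs.simple i)))
      (f₂ := LinearMap.mulLeft _ (θ (T (cs.simple i))) ∘ₗ θ) (hsimple i))
  have hreduced : ∀ l, cs.IsReduced l →
      ∀ y, θ (T (cs.wordProd l) * y) = θ (T (cs.wordProd l)) * θ y := by
    intro l
    induction l with
    | nil => simp [hA.one, hone]
    | cons i l ih =>
      intro hil y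
      have hl : cs.IsReduced l := hil.drop 1
      have hT : T (cs.wordProd (i :: l)) = T (cs.simple i) * T (cs.wordProd l) := by
        rw [cs.wordProd_cons, hA.simple_mul_of_length_succ]
        rw [← cs.wordProd_cons, hil.eq, hl.eq, List.length_cons]
      rw [hT, mul_assoc, hsimple', ih hl, hsimple', mul_assoc]
  have hbasis : ∀ w, θ (T w * y) = θ (T w) * θ y := fun w => by
    obtain ⟨l, hl, rfl⟩ := cs.exists_isReduced w
    exact hreduced l hl y
  exact LinearMap.congr_fun (T.ext (f₁ := θ ∘ₗ LinearMap.mulRight _ y)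
    (f₂ := LinearMap.mulRight _ (θ y) ∘ₗ θ) hbasis) x

variable {φ' : B → Γ} {T' : Module.Basis W (AddMonoidAlgebra ℤ Γ) A'}

theorem map_simple_mul_of_apply_eq_neg_one_pow_smul (hA : IsHeckeAlgebra cs φ T)
    (hA' : IsHeckeAlgebra cs φ' T') {ℓ : W → ℕ}
    (hℓ : ∀ i u, cs.length (cs.simple i * u) = cs.length u + 1 →
      ℓ (cs.simple i * u) = ℓ (cs.simple i) + ℓ u)
    (hφ' : ∀ i, φ' i = (-1 : ℤ) ^ ℓ (cs.simple i) • φ i)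
    {θ : A →ₗ[AddMonoidAlgebra ℤ Γ] A'} (hθ : ∀ w, θ (T w) = (-1 : ℤ) ^ ℓ w • T' w)
    (i : B) (u : W) :
    θ (T (cs.simple i) * T u) = θ (T (cs.simple i)) * θ (T u) := by
  rcases cs.length_simple_mul u i with hlen | hlen
  · rw [hA.simple_mul_of_length_succ hlen, hθ, hθ, hθ, hℓ i u hlen, pow_add, smul_mul_smul_comm,
      hA'.simple_mul_of_length_succ hlen]
  · set u' := cs.simple i * u
    have hu : cs.simple i * u' = u := by simp [u']
    have hℓu : ℓ u = ℓ (cs.simple i) + ℓ u' := hu ▸ hℓ i u' (by rw [hu]; omega)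
    simp only [hA.simple_mul_of_length_pred hlen, map_add, map_smul, hθ]
    rw [smul_mul_smul_comm, hA'.simple_mul_of_length_pred hlen, hφ' i,
      expG_sub_expG_neg_zsmul_neg_one_pow, hℓu, pow_add]
    have hsq : ((-1 : ℤ) ^ ℓ (cs.simple i)) * (-1) ^ ℓ (cs.simple i) = 1 := by
      rw [← pow_add, ← two_mul, pow_mul, neg_one_sq, one_pow]
    rw [← mul_assoc, hsq, one_mul]
    module

end IsHeckeAlgebra

open Classical in
theorem stmt10_general {B W Γ : Type*} [Group W] [AddCommGroup Γ]
    {M : CoxeterMatrix B} (cs : CoxeterSystem M W)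
    (P : B → Prop)
    (φ φ' : B → Γ)
    (hφ' : ∀ i : B, φ' i = if P i then φ i else -φ i)
    (ℓm : W → ℕ)
    (hℓm : ∀ (w : W) (l : List B), cs.wordProd l = w → cs.IsReduced l →
      ℓm w = (l.filter (fun i => decide (¬ P i))).length)
    {A A' : Type*} [Ring A] [Algebra (AddMonoidAlgebra ℤ Γ) A]
    [Ring A'] [Algebra (AddMonoidAlgebra ℤ Γ) A']
    (T : Module.Basis W (AddMonoidAlgebra ℤ Γ) A) (T' : Module.Basis W (AddMonoidAlgebra ℤ Γ) A')
    (hA : IsHeckeAlgebra cs φ T) (hA' : IsHeckeAlgebra cs φ' T')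
    (θ : A →ₗ[AddMonoidAlgebra ℤ Γ] A')
    (hθ : ∀ w : W, θ (T w) = ((-1 : ℤ) ^ ℓm w) • T' w) :
    θ 1 = 1 ∧ (∀ x y : A, θ (x * y) = θ x * θ y) ∧ Function.Bijective θ := by
  have hℓ : cs.CountsLetters (fun i => ¬ P i) ℓm := hℓm
  have hφ'ℓ : ∀ i, φ' i = (-1 : ℤ) ^ ℓm (cs.simple i) • φ i := fun i => by
    by_cases hP : P i <;> simp [hφ' i, hℓ.apply_simple, hP]
  have hone : θ 1 = 1 := by rw [← hA.one, hθ, hℓ.map_one, pow_zero, one_smul, hA'.one]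
  refine ⟨hone, hA.map_mul_of_map_simple_mul hone ?_, ?_⟩
  · exact hA.map_simple_mul_of_apply_eq_neg_one_pow_smul hA'
      (fun _ _ => hℓ.apply_simple_mul) hφ'ℓ hθ
  · exact T.bijective_of_apply_eq_units_zsmul T' θ (fun w => (-1) ^ ℓm w) (by simpa using hθ)

open Classical in
/-- Sign change: if `S = S₊ ∪ S₋` with no conjugacy between the parts (`P` picks
out `S₊`), `φ` a weight function, and `φ'` obtained by flipping the sign of `φ` on
`S₋`, then the `ℤ[Γ]`-linear map `θ : H(W,S,φ) → H(W,S,φ')`,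
`T_w ↦ (−1)^{ℓ₋(w)} T_w`, is a `ℤ[Γ]`-algebra isomorphism. -/
theorem stmt10 {B W Γ : Type*} [Group W] [AddCommGroup Γ] [LinearOrder Γ] [IsOrderedAddMonoid Γ]
    {M : CoxeterMatrix B} (cs : CoxeterSystem M W)
    (P : B → Prop)
    (hsep : ∀ i j : B, P i → ¬ P j → ¬ IsConj (cs.simple i) (cs.simple j))
    (φ φ' : B → Γ)
    (hφconj : ∀ i j : B, IsConj (cs.simple i) (cs.simple j) → φ i = φ j)
    (hφ' : ∀ i : B, φ' i = if P i then φ i else -φ i)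
    (ℓm : W → ℕ)
    (hℓm : ∀ (w : W) (l : List B), cs.wordProd l = w → cs.IsReduced l →
      ℓm w = (l.filter (fun i => decide (¬ P i))).length)
    {A A' : Type*} [Ring A] [Algebra (AddMonoidAlgebra ℤ Γ) A]
    [Ring A'] [Algebra (AddMonoidAlgebra ℤ Γ) A']
    (T : Module.Basis W (AddMonoidAlgebra ℤ Γ) A) (T' : Module.Basis W (AddMonoidAlgebra ℤ Γ) A')
    (hA : IsHeckeAlgebra cs φ T) (hA' : IsHeckeAlgebra cs φ' T')
    (θ : A →ₗ[AddMonoidAlgebra ℤ Γ] A')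
    (hθ : ∀ w : W, θ (T w) = ((-1 : ℤ) ^ ℓm w) • T' w) :
    θ 1 = 1 ∧ (∀ x y : A, θ (x * y) = θ x * θ y) ∧ Function.Bijective θ :=
  stmt10_general cs P φ φ' hφ' ℓm hℓm T T' hA hA' θ hθ
end
end

section
/- Under the sign-change isomorphism θ : H(W,S,φ) → H(W,S,φ') (sending T_w^φ to (−1)^{ℓ₋(w)}T_w^{φ'}), the Kazhdan–Lusztig basis elements satisfy θ(C_w^φ) = (−1)^{ℓ₋(w)} C_w^{φ'} for all w ∈ W. Consequently, for each ? ∈ {L,R,LR}, the preorders ≤_?^φ and ≤_?^{φ'} coincide and the equivalence relations ∼_?^φ and ∼_?^{φ'} coincide, so the partitions of W into left, right, and two-sided cells for φ and φ' are the same. -/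
open Finsupp

noncomputable section

/-- `H_{<0}`: elements whose `T`-coefficients are supported on `Γ_{<0}`. -/
def heckeNeg {W Γ : Type*} [AddCommGroup Γ] [LinearOrder Γ] [IsOrderedAddMonoid Γ] {A : Type*} [Ring A]
    [Algebra (AddMonoidAlgebra ℤ Γ) A] (T : Module.Basis W (AddMonoidAlgebra ℤ Γ) A) :
    Set A :=
  {h | ∀ (w : W) (γ : Γ), (T.repr h w).coeff γ ≠ 0 → γ < 0}

section Cells

variable {W Γ : Type*} [AddCommGroup Γ] [LinearOrder Γ] [IsOrderedAddMonoid Γ] {A : Type*} [Ring A]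
  [Algebra (AddMonoidAlgebra ℤ Γ) A]

/-- `x ←_L y` : `C_x` occurs in `h C_y` for some `h`. -/
def heckeStepL (bC : Module.Basis W (AddMonoidAlgebra ℤ Γ) A) (x y : W) : Prop :=
  ∃ h : A, bC.repr (h * bC y) x ≠ 0

def heckeStepR (bC : Module.Basis W (AddMonoidAlgebra ℤ Γ) A) (x y : W) : Prop :=
  ∃ h : A, bC.repr (bC y * h) x ≠ 0

def heckeStepLR (bC : Module.Basis W (AddMonoidAlgebra ℤ Γ) A) (x y : W) : Prop :=
  ∃ h : A, bC.repr (h * bC y) x ≠ 0 ∨ bC.repr (bC y * h) x ≠ 0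

/-- The Kazhdan–Lusztig left preorder `≤_L`. -/
def heckeLeL (bC : Module.Basis W (AddMonoidAlgebra ℤ Γ) A) : W → W → Prop :=
  Relation.ReflTransGen (heckeStepL bC)

def heckeLeR (bC : Module.Basis W (AddMonoidAlgebra ℤ Γ) A) : W → W → Prop :=
  Relation.ReflTransGen (heckeStepR bC)

def heckeLeLR (bC : Module.Basis W (AddMonoidAlgebra ℤ Γ) A) : W → W → Prop :=
  Relation.ReflTransGen (heckeStepLR bC)

/-- The equivalence relation `∼_L`. -/
def heckeSimL (bC : Module.Basis W (AddMonoidAlgebra ℤ Γ) A) (x y : W) : Prop :=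
  heckeLeL bC x y ∧ heckeLeL bC y x

def heckeSimR (bC : Module.Basis W (AddMonoidAlgebra ℤ Γ) A) (x y : W) : Prop :=
  heckeLeR bC x y ∧ heckeLeR bC y x

def heckeSimLR (bC : Module.Basis W (AddMonoidAlgebra ℤ Γ) A) (x y : W) : Prop :=
  heckeLeLR bC x y ∧ heckeLeLR bC y x

end Cells

/-! The sign-change isomorphism `θ` preserves bar-invariance and `H_{<0}` and matches the standard
bases up to the signs `(-1)^{ℓ₋(w)}`, so `(-1)^{ℓ₋(w)} θ(C_w)` satisfies the characterisation of
`C'_w`. Once the two Kazhdan–Lusztig bases correspond up to units under a ring isomorphism, the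
coefficient of `C_x` in `h C_y` (or `C_y h`) vanishes exactly when that of `C'_x` in
`θ(h) C'_y` does, so all step relations, and hence all preorders and cells, coincide. -/

namespace Module.Basis

section

variable {ι R M M' : Type*} [Ring R] [AddCommGroup M] [Module R M] [AddCommGroup M']
  [Module R M'] (b : Basis ι R M) (b' : Basis ι R M') {f : M →ₗ[R] M'} {c : ι → ℤ}

theorem repr_map_apply_of_map_eq_zsmul (hf : ∀ i, f (b i) = c i • b' i) (m : M) (i : ι) :
    b'.repr (f m) i = c i • b.repr m i := by
  have hlin : Finsupp.lapply i ∘ₗ b'.repr.toLinearMap ∘ₗ f =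
      c i • (Finsupp.lapply i ∘ₗ b.repr.toLinearMap) := by
    refine b.ext fun j => ?_
    by_cases hji : j = i
    · subst hji; simp [hf]
    · simp [hf, hji]
  exact LinearMap.congr_fun hlin m

theorem repr_map_apply_ne_zero_iff (hc : ∀ i, IsUnit (c i)) (hf : ∀ i, f (b i) = c i • b' i)
    (m : M) (i : ι) : b'.repr (f m) i ≠ 0 ↔ b.repr m i ≠ 0 := by
  rw [b.repr_map_apply_of_map_eq_zsmul b' hf, ne_eq, (hc i).smul_eq_zero]

end

section

variable {ι R A A' : Type*} [Ring R] [Ring A] [Module R A] [Ring A'] [Module R A']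
  {b : Basis ι R A} {b' : Basis ι R A'} {f : A →ₗ[R] A'} {c : ι → ℤ}

theorem repr_map_mul_apply_ne_zero_iff (hc : ∀ i, IsUnit (c i)) (hf : ∀ i, f (b i) = c i • b' i)
    (hfmul : ∀ x y, f (x * y) = f x * f y) (a : A) (i j : ι) :
    b'.repr (f a * b' j) i ≠ 0 ↔ b.repr (a * b j) i ≠ 0 := by
  rw [← b.repr_map_apply_ne_zero_iff b' hc hf, hfmul, hf, mul_smul_comm, map_zsmul,
    Finsupp.smul_apply, ne_eq, ne_eq, (hc j).smul_eq_zero]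

theorem repr_mul_map_apply_ne_zero_iff (hc : ∀ i, IsUnit (c i)) (hf : ∀ i, f (b i) = c i • b' i)
    (hfmul : ∀ x y, f (x * y) = f x * f y) (a : A) (i j : ι) :
    b'.repr (b' j * f a) i ≠ 0 ↔ b.repr (b j * a) i ≠ 0 := by
  rw [← b.repr_map_apply_ne_zero_iff b' hc hf, hfmul, hf, smul_mul_assoc, map_zsmul,
    Finsupp.smul_apply, ne_eq, ne_eq, (hc j).smul_eq_zero]

end

end Module.Basis

section HeckeNeg

variable {W Γ : Type*} [AddCommGroup Γ] [LinearOrder Γ] [IsOrderedAddMonoid Γ]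
  {A A' : Type*} [Ring A] [Algebra (AddMonoidAlgebra ℤ Γ) A] [Ring A']
  [Algebra (AddMonoidAlgebra ℤ Γ) A']

theorem zsmul_mem_heckeNeg {T : Module.Basis W (AddMonoidAlgebra ℤ Γ) A} {h : A}
    (hh : h ∈ heckeNeg T) (n : ℤ) : n • h ∈ heckeNeg T := by
  intro w γ hne
  refine hh w γ fun h0 => hne ?_
  rw [map_zsmul, Finsupp.smul_apply, AddMonoidAlgebra.coeff_smul_apply, h0, smul_zero]

theorem apply_klBasis_eq_zsmul {T : Module.Basis W (AddMonoidAlgebra ℤ Γ) A}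
    {T' : Module.Basis W (AddMonoidAlgebra ℤ Γ) A'} {θ : A →ₗ[AddMonoidAlgebra ℤ Γ] A'}
    {c : W → ℤ} (hc : ∀ w, IsUnit (c w)) (hθ : ∀ w, θ (T w) = c w • T' w)
    {bar : A →+ A} {bar' : A' →+ A'} (hθbar : ∀ a, θ (bar a) = bar' (θ a))
    (hθneg : θ '' heckeNeg T ⊆ heckeNeg T') {bC : Module.Basis W (AddMonoidAlgebra ℤ Γ) A}
    {bC' : Module.Basis W (AddMonoidAlgebra ℤ Γ) A'}
    (hC : ∀ w, bar (bC w) = bC w ∧ bC w - T w ∈ heckeNeg T)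
    (hC'uniq : ∀ w h, bar' h = h → h - T' w ∈ heckeNeg T' → h = bC' w) (w : W) :
    θ (bC w) = c w • bC' w := by
  have hcc : ∀ x : A', c w • c w • x = x := fun x => by
    rw [smul_smul, Int.isUnit_mul_self (hc w), one_smul]
  have hbar : bar' (c w • θ (bC w)) = c w • θ (bC w) := by
    rw [map_zsmul, ← hθbar, (hC w).1]
  have hneg : c w • θ (bC w) - T' w ∈ heckeNeg T' := by
    have hθdiff : θ (bC w - T w) ∈ heckeNeg T' := hθneg ⟨_, (hC w).2, rfl⟩
    rw [map_sub, hθ] at hθdiff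
    simpa only [smul_sub, hcc] using zsmul_mem_heckeNeg hθdiff (c w)
  rw [← hC'uniq w _ hbar hneg, hcc]

end HeckeNeg

section Cells

variable {W Γ : Type*} [AddCommGroup Γ] {A A' : Type*} [Ring A] [Algebra (AddMonoidAlgebra ℤ Γ) A]
  [Ring A'] [Algebra (AddMonoidAlgebra ℤ Γ) A'] {bC : Module.Basis W (AddMonoidAlgebra ℤ Γ) A}
  {bC' : Module.Basis W (AddMonoidAlgebra ℤ Γ) A'} {θ : A →ₗ[AddMonoidAlgebra ℤ Γ] A'}
  {c : W → ℤ}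

theorem heckeStepL_eq_of_map_eq_zsmul (hc : ∀ w, IsUnit (c w))
    (hθC : ∀ w, θ (bC w) = c w • bC' w) (hθmul : ∀ x y, θ (x * y) = θ x * θ y)
    (hθsurj : Function.Surjective θ) : heckeStepL bC = heckeStepL bC' := by
  ext x y
  simp only [heckeStepL, hθsurj.exists, Module.Basis.repr_map_mul_apply_ne_zero_iff hc hθC hθmul]

theorem heckeStepR_eq_of_map_eq_zsmul (hc : ∀ w, IsUnit (c w))
    (hθC : ∀ w, θ (bC w) = c w • bC' w) (hθmul : ∀ x y, θ (x * y) = θ x * θ y)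
    (hθsurj : Function.Surjective θ) : heckeStepR bC = heckeStepR bC' := by
  ext x y
  simp only [heckeStepR, hθsurj.exists, Module.Basis.repr_mul_map_apply_ne_zero_iff hc hθC hθmul]

theorem heckeStepLR_eq_of_map_eq_zsmul (hc : ∀ w, IsUnit (c w))
    (hθC : ∀ w, θ (bC w) = c w • bC' w) (hθmul : ∀ x y, θ (x * y) = θ x * θ y)
    (hθsurj : Function.Surjective θ) : heckeStepLR bC = heckeStepLR bC' := by
  ext x y
  simp only [heckeStepLR, hθsurj.exists, Module.Basis.repr_map_mul_apply_ne_zero_iff hc hθC hθmul,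
    Module.Basis.repr_mul_map_apply_ne_zero_iff hc hθC hθmul]

end Cells

open Classical in
theorem stmt11_general {W Γ : Type*} [AddCommGroup Γ] [LinearOrder Γ] [IsOrderedAddMonoid Γ]
    (ℓm : W → ℕ)
    {A A' : Type*} [Ring A] [Algebra (AddMonoidAlgebra ℤ Γ) A]
    [Ring A'] [Algebra (AddMonoidAlgebra ℤ Γ) A']
    (T : Module.Basis W (AddMonoidAlgebra ℤ Γ) A) (T' : Module.Basis W (AddMonoidAlgebra ℤ Γ) A')
    (θ : A →ₗ[AddMonoidAlgebra ℤ Γ] A')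
    (hθ : ∀ w : W, θ (T w) = ((-1 : ℤ) ^ ℓm w) • T' w)
    (hθmul : ∀ x y : A, θ (x * y) = θ x * θ y) (hθbij : Function.Bijective θ)
    (bar : A →+ A) (bar' : A' →+ A')
    (hθbar : ∀ a : A, θ (bar a) = bar' (θ a))
    (hθneg : θ '' heckeNeg T = heckeNeg T')
    (bC : Module.Basis W (AddMonoidAlgebra ℤ Γ) A) (bC' : Module.Basis W (AddMonoidAlgebra ℤ Γ) A')
    (hC : ∀ w : W, bar (bC w) = bC w ∧ bC w - T w ∈ heckeNeg T)
    (hC'uniq : ∀ (w : W) (h : A'), bar' h = h → h - T' w ∈ heckeNeg T' → h = bC' w) :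
    (∀ w : W, θ (bC w) = ((-1 : ℤ) ^ ℓm w) • bC' w) ∧
    (∀ x y : W, heckeLeL bC x y ↔ heckeLeL bC' x y) ∧
    (∀ x y : W, heckeLeR bC x y ↔ heckeLeR bC' x y) ∧
    (∀ x y : W, heckeLeLR bC x y ↔ heckeLeLR bC' x y) ∧
    (∀ x y : W, heckeSimL bC x y ↔ heckeSimL bC' x y) ∧
    (∀ x y : W, heckeSimR bC x y ↔ heckeSimR bC' x y) ∧
    (∀ x y : W, heckeSimLR bC x y ↔ heckeSimLR bC' x y) := by
  have hsign : ∀ w, IsUnit ((-1 : ℤ) ^ ℓm w) := fun w => isUnit_neg_one.pow _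
  have hθC := apply_klBasis_eq_zsmul hsign hθ hθbar hθneg.subset hC hC'uniq
  have hL := heckeStepL_eq_of_map_eq_zsmul hsign hθC hθmul hθbij.2
  have hR := heckeStepR_eq_of_map_eq_zsmul hsign hθC hθmul hθbij.2
  have hLR := heckeStepLR_eq_of_map_eq_zsmul hsign hθC hθmul hθbij.2
  refine ⟨hθC, ?_⟩
  simp only [heckeSimL, heckeSimR, heckeSimLR, heckeLeL, heckeLeR, heckeLeLR, hL, hR, hLR,
    iff_self, implies_true, and_self]

open Classical in
/-- Under the sign-change isomorphism `θ` one has `θ(C_w^φ) = (−1)^{ℓ₋(w)} C_w^{φ'}`,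
and consequently the Kazhdan–Lusztig preorders `≤_?` and equivalence relations `∼_?`
(for `? ∈ {L,R,LR}`) for `φ` and `φ'` coincide. -/
theorem stmt11 {B W Γ : Type*} [Group W] [AddCommGroup Γ] [LinearOrder Γ] [IsOrderedAddMonoid Γ]
    {M : CoxeterMatrix B} (cs : CoxeterSystem M W)
    (P : B → Prop)
    (hsep : ∀ i j : B, P i → ¬ P j → ¬ IsConj (cs.simple i) (cs.simple j))
    (φ φ' : B → Γ)
    (hφconj : ∀ i j : B, IsConj (cs.simple i) (cs.simple j) → φ i = φ j)
    (hφ' : ∀ i : B, φ' i = if P i then φ i else -φ i)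
    (ℓm : W → ℕ)
    (hℓm : ∀ (w : W) (l : List B), cs.wordProd l = w → cs.IsReduced l →
      ℓm w = (l.filter (fun i => decide (¬ P i))).length)
    {A A' : Type*} [Ring A] [Algebra (AddMonoidAlgebra ℤ Γ) A]
    [Ring A'] [Algebra (AddMonoidAlgebra ℤ Γ) A']
    (T : Module.Basis W (AddMonoidAlgebra ℤ Γ) A) (T' : Module.Basis W (AddMonoidAlgebra ℤ Γ) A')
    (hA : IsHeckeAlgebra cs φ T) (hA' : IsHeckeAlgebra cs φ' T')
    (θ : A →ₗ[AddMonoidAlgebra ℤ Γ] A')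
    (hθ : ∀ w : W, θ (T w) = ((-1 : ℤ) ^ ℓm w) • T' w)
    (hθmul : ∀ x y : A, θ (x * y) = θ x * θ y) (hθbij : Function.Bijective θ)
    (bar : A →+ A) (bar' : A' →+ A')
    (hθbar : ∀ a : A, θ (bar a) = bar' (θ a))
    (hθneg : θ '' heckeNeg T = heckeNeg T')
    (bC : Module.Basis W (AddMonoidAlgebra ℤ Γ) A) (bC' : Module.Basis W (AddMonoidAlgebra ℤ Γ) A')
    (hC : ∀ w : W, bar (bC w) = bC w ∧ bC w - T w ∈ heckeNeg T)
    (hCuniq : ∀ (w : W) (h : A), bar h = h → h - T w ∈ heckeNeg T → h = bC w)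
    (hC' : ∀ w : W, bar' (bC' w) = bC' w ∧ bC' w - T' w ∈ heckeNeg T')
    (hC'uniq : ∀ (w : W) (h : A'), bar' h = h → h - T' w ∈ heckeNeg T' → h = bC' w) :
    (∀ w : W, θ (bC w) = ((-1 : ℤ) ^ ℓm w) • bC' w) ∧
    (∀ x y : W, heckeLeL bC x y ↔ heckeLeL bC' x y) ∧
    (∀ x y : W, heckeLeR bC x y ↔ heckeLeR bC' x y) ∧
    (∀ x y : W, heckeLeLR bC x y ↔ heckeLeLR bC' x y) ∧
    (∀ x y : W, heckeSimL bC x y ↔ heckeSimL bC' x y) ∧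
    (∀ x y : W, heckeSimR bC x y ↔ heckeSimR bC' x y) ∧
    (∀ x y : W, heckeSimLR bC x y ↔ heckeSimLR bC' x y) :=
  stmt11_general ℓm T T' θ hθ hθmul hθbij bar bar' hθbar hθneg bC bC' hC hC'uniq
end
end

section
/- Let (W,S) be a Coxeter system, S = I ∪ J a partition such that no element of I is conjugate to an element of J, and φ a weight function with φ(s) = 0 for all s ∈ I. Then for every s ∈ I, (T_s^φ)² = 1 and T_s^φ is fixed by the bar involution, and more generally, for x, y ∈ W with ℓ_J(xy) = ℓ_J(x)+ℓ_J(y), one has T_x^φ T_y^φ = T_{xy}^φ. -/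
/-!
Counting only the letters of `J` in a reduced word gives a function `ℓ_J` which, like the
length, changes by at most one under left multiplication by a simple reflection and is
subadditive. Induct on the length of `x`, peeling off a left descent `s` of `x`. If `s ∉ J`
then `φ(s) = 0`, so `T_s² = 1` and `T_s T_w = T_{sw}` for every `w`. If `s ∈ J`, the
hypothesis `ℓ_J(xy) = ℓ_J(x) + ℓ_J(y)` together with subadditivity forces `s` to raise
the length of `(sx)y` as well, so `T_s T_{sxy} = T_{xy}` by the length-additivity of `T`.
-/

open Finsupp

noncomputable section

namespace CoxeterSystem

variable {B W : Type*} [Group W] {M : CoxeterMatrix B}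

def IsLengthIn (cs : CoxeterSystem M W) (J : B → Prop) [DecidablePred J] (f : W → ℕ) :
    Prop :=
  ∀ (w : W) (l : List B), cs.wordProd l = w → cs.IsReduced l →
    f w = (l.filter (fun i => decide (J i))).length

namespace IsLengthIn

variable {cs : CoxeterSystem M W} {J : B → Prop} [DecidablePred J] {f : W → ℕ}

theorem map_one (hf : cs.IsLengthIn J f) : f 1 = 0 :=
  hf 1 [] cs.wordProd_nil (by simp [IsReduced])

theorem simple_mul_of_not_isLeftDescent (hf : cs.IsLengthIn J f) {w : W} {i : B}
    (h : ¬cs.IsLeftDescent w i) : f (cs.simple i * w) = f w + if J i then 1 else 0 := by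
  obtain ⟨l, hl, rfl⟩ := cs.exists_isReduced w
  have hil : cs.IsReduced (i :: l) := by
    rw [IsReduced, wordProd_cons, cs.not_isLeftDescent_iff.mp h, hl.eq, List.length_cons]
  rw [hf _ _ (cs.wordProd_cons i l) hil, hf _ l rfl hl, List.filter_cons]
  split_ifs <;> simp_all

theorem simple_mul_of_isLeftDescent (hf : cs.IsLengthIn J f) {w : W} {i : B}
    (h : cs.IsLeftDescent w i) : f w = f (cs.simple i * w) + if J i then 1 else 0 := by
  simpa only [simple_mul_simple_cancel_left] using
    hf.simple_mul_of_not_isLeftDescent (cs.isLeftDescent_iff_not_isLeftDescent_mul.mp h)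

theorem simple_mul_le (hf : cs.IsLengthIn J f) (i : B) (w : W) :
    f (cs.simple i * w) ≤ f w + if J i then 1 else 0 := by
  by_cases h : cs.IsLeftDescent w i
  · have := hf.simple_mul_of_isLeftDescent h
    omega
  · exact (hf.simple_mul_of_not_isLeftDescent h).le

theorem mul_le (hf : cs.IsLengthIn J f) (u v : W) : f (u * v) ≤ f u + f v := by
  induction hn : cs.length u generalizing u with
  | zero => simp [cs.length_eq_zero_iff.mp hn, hf.map_one]
  | succ n ih =>
    obtain ⟨i, hi⟩ := cs.exists_leftDescent_of_ne_one (w := u) (by rintro rfl; simp at hn)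
    have hlen := cs.isLeftDescent_iff.mp hi
    have hu := hf.simple_mul_of_isLeftDescent hi
    have hstep := hf.simple_mul_le i (cs.simple i * (u * v))
    have := ih (cs.simple i * u) (by omega)
    rw [simple_mul_simple_cancel_left] at hstep
    rw [mul_assoc] at this
    omega

variable (hf : cs.IsLengthIn J f) {x y : W} {i : B} (hx : ¬cs.IsLeftDescent x i)
  (hxy : f (cs.simple i * x * y) = f (cs.simple i * x) + f y)
include hf hx hxy

theorem add_of_simple_mul_add : f (x * y) = f x + f y := by
  have hsx := hf.simple_mul_of_not_isLeftDescent hx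
  have hsxy := hf.simple_mul_le i (x * y)
  have := hf.mul_le x y
  rw [mul_assoc] at hxy
  omega

theorem not_isLeftDescent_mul_of_simple_mul_add (hi : J i) :
    ¬cs.IsLeftDescent (x * y) i := by
  intro hd
  have hsx := hf.simple_mul_of_not_isLeftDescent hx
  have hsxy := hf.simple_mul_of_isLeftDescent hd
  have := hf.mul_le x y
  rw [mul_assoc] at hxy
  simp only [hi, if_true] at hsx hsxy
  omega

end IsLengthIn

end CoxeterSystem

namespace IsHeckeAlgebra

open CoxeterSystem

variable {B W Γ : Type*} [Group W] [AddCommGroup Γ] {M : CoxeterMatrix B}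
  {cs : CoxeterSystem M W} {φ : B → Γ} {A : Type*} [Ring A]
  [Algebra (AddMonoidAlgebra ℤ Γ) A] {T : Module.Basis W (AddMonoidAlgebra ℤ Γ) A}

theorem simple_mul_self (hA : IsHeckeAlgebra cs φ T) {i : B} (hφ : φ i = 0) :
    T (cs.simple i) * T (cs.simple i) = 1 := by
  have hq := hA.quadratic i
  rw [hφ, neg_zero, show expG (0 : Γ) = 1 from rfl, map_one] at hq
  rw [← sub_eq_zero, ← hq]
  noncomm_ring

theorem simple_mul_of_not_isLeftDescent (hA : IsHeckeAlgebra cs φ T) {w : W} {i : B}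
    (h : ¬cs.IsLeftDescent w i) : T (cs.simple i) * T w = T (cs.simple i * w) :=
  hA.mul_of_length_add _ _ (by rw [cs.not_isLeftDescent_iff.mp h, cs.length_simple, add_comm])

theorem simple_mul_of_weight_eq_zero (hA : IsHeckeAlgebra cs φ T) {i : B} (hφ : φ i = 0)
    (w : W) : T (cs.simple i) * T w = T (cs.simple i * w) := by
  by_cases h : cs.IsLeftDescent w i
  · rw [cs.isLeftDescent_iff_not_isLeftDescent_mul] at h
    calc T (cs.simple i) * T w
        = T (cs.simple i) * (T (cs.simple i) * T (cs.simple i * w)) := by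
          rw [hA.simple_mul_of_not_isLeftDescent h, simple_mul_simple_cancel_left]
      _ = T (cs.simple i * w) := by rw [← mul_assoc, hA.simple_mul_self hφ, one_mul]
  · exact hA.simple_mul_of_not_isLeftDescent h

theorem mul_of_lengthIn_add (hA : IsHeckeAlgebra cs φ T) {J : B → Prop} [DecidablePred J]
    {f : W → ℕ} (hf : cs.IsLengthIn J f) (hφ : ∀ i, ¬J i → φ i = 0) {x y : W}
    (hxy : f (x * y) = f x + f y) : T x * T y = T (x * y) := by
  induction hn : cs.length x generalizing x with
  | zero => simp [cs.length_eq_zero_iff.mp hn, hA.one]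
  | succ n ih =>
    obtain ⟨i, hi⟩ := cs.exists_leftDescent_of_ne_one (w := x) (by rintro rfl; simp at hn)
    have hlen := cs.isLeftDescent_iff.mp hi
    obtain ⟨x', rfl⟩ : ∃ x', x = cs.simple i * x' :=
      ⟨cs.simple i * x, (cs.simple_mul_simple_cancel_left i).symm⟩
    rw [simple_mul_simple_cancel_left] at hlen
    have hx' : ¬cs.IsLeftDescent x' i := by
      rw [cs.not_isLeftDescent_iff]
      omega
    have ih' : T x' * T y = T (x' * y) := ih (hf.add_of_simple_mul_add hx' hxy) (by omega)
    rw [← hA.simple_mul_of_not_isLeftDescent hx', mul_assoc, ih', mul_assoc]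
    by_cases hJ : J i
    · exact hA.simple_mul_of_not_isLeftDescent
        (hf.not_isLeftDescent_mul_of_simple_mul_add hx' hxy hJ)
    · exact hA.simple_mul_of_weight_eq_zero (hφ i hJ) _

end IsHeckeAlgebra

open Classical in
theorem stmt12_general {B W Γ : Type*} [Group W] [AddCommGroup Γ]
    {M : CoxeterMatrix B} (cs : CoxeterSystem M W)
    (P : B → Prop)
    (φ : B → Γ)
    (hφI : ∀ i : B, P i → φ i = 0)
    (ℓJ : W → ℕ)
    (hℓJ : ∀ (w : W) (l : List B), cs.wordProd l = w → cs.IsReduced l →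
      ℓJ w = (l.filter (fun i => decide (¬ P i))).length)
    {A : Type*} [Ring A] [Algebra (AddMonoidAlgebra ℤ Γ) A]
    (T : Module.Basis W (AddMonoidAlgebra ℤ Γ) A) (hA : IsHeckeAlgebra cs φ T)
    (bar : A →+ A)
    (hbarT : ∀ w : W, bar (T w) * T w⁻¹ = 1) :
    (∀ i : B, P i → T (cs.simple i) * T (cs.simple i) = 1 ∧
      bar (T (cs.simple i)) = T (cs.simple i)) ∧
    (∀ x y : W, ℓJ (x * y) = ℓJ x + ℓJ y → T x * T y = T (x * y)) := by
  refine ⟨fun i hi => ?_, fun x y hxy => ?_⟩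
  · have hsq := hA.simple_mul_self (hφI i hi)
    have hbar := hbarT (cs.simple i)
    rw [cs.inv_simple] at hbar
    exact ⟨hsq, left_inv_eq_right_inv hbar hsq⟩
  · have hf : cs.IsLengthIn (fun i => ¬P i) ℓJ := hℓJ
    exact hA.mul_of_lengthIn_add hf (fun i hi => hφI i (not_not.mp hi)) hxy

open Classical in
/-- If `S = I ∪ J` with no conjugacy between the parts (`P` picks out `I`) and
`φ` vanishes on `I`, then `(T_s)² = 1` and `T̄_s = T_s` for `s ∈ I`, and
`T_x T_y = T_{xy}` whenever `ℓ_J(xy) = ℓ_J(x) + ℓ_J(y)`.  The bar involution is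
pinned by `T̄_w · T_{w⁻¹} = 1`. -/
theorem stmt12 {B W Γ : Type*} [Group W] [AddCommGroup Γ] [LinearOrder Γ] [IsOrderedAddMonoid Γ]
    {M : CoxeterMatrix B} (cs : CoxeterSystem M W)
    (P : B → Prop)
    (hsep : ∀ i j : B, P i → ¬ P j → ¬ IsConj (cs.simple i) (cs.simple j))
    (φ : B → Γ)
    (hφconj : ∀ i j : B, IsConj (cs.simple i) (cs.simple j) → φ i = φ j)
    (hφI : ∀ i : B, P i → φ i = 0)
    (ℓJ : W → ℕ)
    (hℓJ : ∀ (w : W) (l : List B), cs.wordProd l = w → cs.IsReduced l →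
      ℓJ w = (l.filter (fun i => decide (¬ P i))).length)
    {A : Type*} [Ring A] [Algebra (AddMonoidAlgebra ℤ Γ) A]
    (T : Module.Basis W (AddMonoidAlgebra ℤ Γ) A) (hA : IsHeckeAlgebra cs φ T)
    (bar : A →+ A)
    (hbarmul : ∀ a b : A, bar (a * b) = bar a * bar b)
    (hbarT : ∀ w : W, bar (T w) * T w⁻¹ = 1) :
    (∀ i : B, P i → T (cs.simple i) * T (cs.simple i) = 1 ∧
      bar (T (cs.simple i)) = T (cs.simple i)) ∧
    (∀ x y : W, ℓJ (x * y) = ℓJ x + ℓJ y → T x * T y = T (x * y)) :=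
  stmt12_general cs P φ hφI ℓJ hℓJ T hA bar hbarT
end
end

section
/- Let (W,S) be a Coxeter system, S = I ∪ J a partition with no element of I conjugate to an element of J, and φ a weight function with φ(I) = {0}. Then for x ∈ W_I (the standard parabolic subgroup generated by I) and w ∈ W: C_x^φ = T_x^φ, C_{xw}^φ = T_x^φ C_w^φ, and C_{wx}^φ = C_w^φ T_x^φ, where C denotes Kazhdan–Lusztig basis elements. -/
open Finsupp

noncomputable section

/-! The elements `x` for which `T` is multiplicative against every `T w`, on both sides, form a
subgroup of `W`. When `φ(I) = 0` each `T_s` with `s ∈ I` is an involution, and the quadratic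
relation then makes `T_s` multiplicative regardless of lengths, so `W_I` lies in this subgroup.
For `x` in it, `T_x` is bar-invariant, and left or right multiplication by `T_x` permutes the
standard basis, hence preserves `H_{<0}`. Thus `T_x C_w` and `C_w T_x` are bar-invariant and
congruent to `T_{xw}`, resp. `T_{wx}`, modulo `H_{<0}`, and uniqueness of KL elements applies. -/

section MulCompatible

variable {W A : Type*} [Group W] [Monoid A]

def mulCompatibleSubgroup (T : W → A) (h1 : T 1 = 1) : Subgroup W where
  carrier := {x | ∀ w, T x * T w = T (x * w) ∧ T w * T x = T (w * x)}
  one_mem' w := by simp [h1]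
  mul_mem' {x y} hx hy w := by
    refine ⟨?_, ?_⟩
    · rw [← (hx y).1, mul_assoc, (hy w).1, (hx (y * w)).1, mul_assoc]
    · rw [← (hx y).1, ← mul_assoc, (hx w).2, (hy (w * x)).2, mul_assoc]
  inv_mem' {x} hx w := by
    have hinv : T x⁻¹ * T x = 1 := by rw [(hx x⁻¹).2, inv_mul_cancel, h1]
    have hinv' : T x * T x⁻¹ = 1 := by rw [(hx x⁻¹).1, mul_inv_cancel, h1]
    refine ⟨?_, ?_⟩
    · rw [← mul_inv_cancel_left x w, ← (hx (x⁻¹ * w)).1, ← mul_assoc, hinv, one_mul,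
        inv_mul_cancel_left]
    · rw [← inv_mul_cancel_right w x, ← (hx (w * x⁻¹)).2, mul_assoc, hinv', mul_one,
        mul_inv_cancel_right]

variable {T : W → A} {h1 : T 1 = 1} {x : W}

theorem mem_mulCompatibleSubgroup :
    x ∈ mulCompatibleSubgroup T h1 ↔ ∀ w, T x * T w = T (x * w) ∧ T w * T x = T (w * x) :=
  Iff.rfl

theorem inv_mul_self_of_mem_mulCompatibleSubgroup (hx : x ∈ mulCompatibleSubgroup T h1) :
    T x⁻¹ * T x = 1 := by
  rw [((mem_mulCompatibleSubgroup.mp hx) x⁻¹).2, inv_mul_cancel, h1]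

end MulCompatible

theorem expG_zero {Γ : Type*} [AddCommGroup Γ] : expG (0 : Γ) = 1 := rfl

section Hecke

variable {B W Γ : Type*} [Group W] [AddCommGroup Γ] {M : CoxeterMatrix B}
  {cs : CoxeterSystem M W} {φ : B → Γ} {A : Type*} [Ring A]
  [Algebra (AddMonoidAlgebra ℤ Γ) A] {T : Module.Basis W (AddMonoidAlgebra ℤ Γ) A}

namespace IsHeckeAlgebra

theorem T_simple_mul_self (hA : IsHeckeAlgebra cs φ T) {i : B} (hi : φ i = 0) :
    T (cs.simple i) * T (cs.simple i) = 1 := by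
  have hquad := hA.quadratic i
  simp only [hi, neg_zero, expG_zero, map_one] at hquad
  rw [← sub_eq_zero, ← hquad]
  noncomm_ring

theorem T_simple_mul (hA : IsHeckeAlgebra cs φ T) {i : B} (hi : φ i = 0) (w : W) :
    T (cs.simple i) * T w = T (cs.simple i * w) := by
  have hs := cs.length_simple i
  rcases cs.length_simple_mul w i with h | h
  · exact hA.mul_of_length_add _ w (by omega)
  · have hdown := hA.mul_of_length_add (cs.simple i) (cs.simple i * w)
      (by rw [← mul_assoc, cs.simple_mul_simple_self, one_mul]; omega)
    rw [← mul_assoc, cs.simple_mul_simple_self, one_mul] at hdown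
    rw [← hdown, ← mul_assoc, hA.T_simple_mul_self hi, one_mul]

theorem mul_T_simple (hA : IsHeckeAlgebra cs φ T) {i : B} (hi : φ i = 0) (w : W) :
    T w * T (cs.simple i) = T (w * cs.simple i) := by
  have hs := cs.length_simple i
  rcases cs.length_mul_simple w i with h | h
  · exact hA.mul_of_length_add w _ (by omega)
  · have hdown := hA.mul_of_length_add (w * cs.simple i) (cs.simple i)
      (by rw [mul_assoc, cs.simple_mul_simple_self, mul_one]; omega)
    rw [mul_assoc, cs.simple_mul_simple_self, mul_one] at hdown
    rw [← hdown, mul_assoc, hA.T_simple_mul_self hi, mul_one]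

theorem closure_simple_le_mulCompatibleSubgroup (hA : IsHeckeAlgebra cs φ T) :
    Subgroup.closure (cs.simple '' {i | φ i = 0}) ≤ mulCompatibleSubgroup T hA.one := by
  rw [Subgroup.closure_le]
  rintro _ ⟨i, hi, rfl⟩ w
  exact ⟨hA.T_simple_mul hi w, hA.mul_T_simple hi w⟩

end IsHeckeAlgebra

end Hecke

section HeckeNeg

variable {W Γ : Type*} [AddCommGroup Γ] [LinearOrder Γ] [IsOrderedAddMonoid Γ] {A : Type*}
  [Ring A] [Algebra (AddMonoidAlgebra ℤ Γ) A] {T : Module.Basis W (AddMonoidAlgebra ℤ Γ) A}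

theorem zero_mem_heckeNeg : (0 : A) ∈ heckeNeg T := by
  simp [heckeNeg]

theorem map_mem_heckeNeg {f : A →ₗ[AddMonoidAlgebra ℤ Γ] A} (σ : W ≃ W)
    (hf : ∀ w, f (T w) = T (σ w)) {h : A} (hh : h ∈ heckeNeg T) : f h ∈ heckeNeg T := by
  have hcomp : T.repr.toLinearMap ∘ₗ f = Finsupp.lmapDomain _ _ σ ∘ₗ T.repr.toLinearMap :=
    T.ext fun w => by simp [hf, Finsupp.mapDomain_single]
  have hrepr : T.repr (f h) = Finsupp.mapDomain σ (T.repr h) := DFunLike.congr_fun hcomp h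
  intro v γ hγ
  rw [hrepr, ← σ.apply_symm_apply v, Finsupp.mapDomain_apply σ.injective] at hγ
  exact hh _ _ hγ

variable [Group W] {x : W} {h : A}

theorem T_mul_mem_heckeNeg (hx : ∀ w, T x * T w = T (x * w)) (hh : h ∈ heckeNeg T) :
    T x * h ∈ heckeNeg T :=
  map_mem_heckeNeg (f := LinearMap.mulLeft (AddMonoidAlgebra ℤ Γ) (T x)) (Equiv.mulLeft x) hx hh

theorem mul_T_mem_heckeNeg (hx : ∀ w, T w * T x = T (w * x)) (hh : h ∈ heckeNeg T) :
    h * T x ∈ heckeNeg T :=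
  map_mem_heckeNeg (f := LinearMap.mulRight (AddMonoidAlgebra ℤ Γ) (T x)) (Equiv.mulRight x) hx hh

end HeckeNeg

theorem stmt13_general {B W Γ : Type*} [Group W] [AddCommGroup Γ] [LinearOrder Γ] [IsOrderedAddMonoid Γ]
    {M : CoxeterMatrix B} (cs : CoxeterSystem M W)
    (P : B → Prop)
    (φ : B → Γ)
    (hφI : ∀ i : B, P i → φ i = 0)
    {A : Type*} [Ring A] [Algebra (AddMonoidAlgebra ℤ Γ) A]
    (T : Module.Basis W (AddMonoidAlgebra ℤ Γ) A) (hA : IsHeckeAlgebra cs φ T)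
    (bar : A →+ A)
    (hbarmul : ∀ a b : A, bar (a * b) = bar a * bar b)
    (hbarT : ∀ w : W, bar (T w) * T w⁻¹ = 1)
    (C : W → A)
    (hC : ∀ w : W, bar (C w) = C w ∧ C w - T w ∈ heckeNeg T)
    (hCuniq : ∀ (w : W) (h : A), bar h = h → h - T w ∈ heckeNeg T → h = C w) :
    ∀ x ∈ Subgroup.closure (cs.simple '' {i : B | P i}), ∀ w : W,
      C x = T x ∧ C (x * w) = T x * C w ∧ C (w * x) = C w * T x := by
  intro x hx w
  have hxT : x ∈ mulCompatibleSubgroup T hA.one :=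
    hA.closure_simple_le_mulCompatibleSubgroup
      (Subgroup.closure_mono (Set.image_mono fun i => hφI i) hx)
  have hbx : bar (T x) = T x :=
    left_inv_eq_right_inv (hbarT x) (inv_mul_self_of_mem_mulCompatibleSubgroup hxT)
  have hleft w := ((mem_mulCompatibleSubgroup.mp hxT) w).1
  have hright w := ((mem_mulCompatibleSubgroup.mp hxT) w).2
  refine ⟨(hCuniq x (T x) hbx (by simpa using zero_mem_heckeNeg)).symm, ?_, ?_⟩
  · refine (hCuniq (x * w) (T x * C w) (by rw [hbarmul, hbx, (hC w).1]) ?_).symm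
    rw [← hleft, ← mul_sub]
    exact T_mul_mem_heckeNeg hleft (hC w).2
  · refine (hCuniq (w * x) (C w * T x) (by rw [hbarmul, hbx, (hC w).1]) ?_).symm
    rw [← hright, ← sub_mul]
    exact mul_T_mem_heckeNeg hright (hC w).2

/-- If `S = I ∪ J` with no conjugacy between the parts and `φ(I) = {0}`, then for
`x ∈ W_I` and `w ∈ W` the Kazhdan–Lusztig elements satisfy `C_x = T_x`,
`C_{xw} = T_x C_w` and `C_{wx} = C_w T_x`. -/
theorem stmt13 {B W Γ : Type*} [Group W] [AddCommGroup Γ] [LinearOrder Γ] [IsOrderedAddMonoid Γ]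
    {M : CoxeterMatrix B} (cs : CoxeterSystem M W)
    (P : B → Prop)
    (hsep : ∀ i j : B, P i → ¬ P j → ¬ IsConj (cs.simple i) (cs.simple j))
    (φ : B → Γ)
    (hφconj : ∀ i j : B, IsConj (cs.simple i) (cs.simple j) → φ i = φ j)
    (hφI : ∀ i : B, P i → φ i = 0)
    {A : Type*} [Ring A] [Algebra (AddMonoidAlgebra ℤ Γ) A]
    (T : Module.Basis W (AddMonoidAlgebra ℤ Γ) A) (hA : IsHeckeAlgebra cs φ T)
    (bar : A →+ A)
    (hbarmul : ∀ a b : A, bar (a * b) = bar a * bar b)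
    (hbarT : ∀ w : W, bar (T w) * T w⁻¹ = 1)
    (hbarsmul : ∀ (γ : Γ) (a : A), bar (expG γ • a) = expG (-γ) • bar a)
    (C : W → A)
    (hC : ∀ w : W, bar (C w) = C w ∧ C w - T w ∈ heckeNeg T)
    (hCuniq : ∀ (w : W) (h : A), bar h = h → h - T w ∈ heckeNeg T → h = C w) :
    ∀ x ∈ Subgroup.closure (cs.simple '' {i : B | P i}), ∀ w : W,
      C x = T x ∧ C (x * w) = T x * C w ∧ C (w * x) = C w * T x :=
  stmt13_general cs P φ hφI T hA bar hbarmul hbarT C hC hCuniq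
end
end

section
/- Let 𝔄 be a finite set of rational hyperplanes in Pos(Λ) for Λ a free ℤ-module of finite rank, and define the facet equivalence: X ∼_𝔄 Y iff for every λ with H_λ ∈ 𝔄, X and Y lie in the same piece of the partition Pos(Λ) = U(λ) ∪ H_λ ∪ U(−λ). Let ξ : Pos(Λ) → P be a map into a partially ordered set P that is constant on 𝔄-facets and satisfies ξ(F) ≥ ξ(F') whenever facets F, F' satisfy F ⊆ closure(F'). Then ξ is upper semicontinuous: for each p ∈ P, the set {x ∈ Pos(Λ) | ξ(x) < p} is open in the topology on Pos(Λ). -/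
def IsPositiveSubset {Λ : Type*} [AddCommGroup Λ] (X : Set Λ) : Prop :=
  X ∪ (-X) = Set.univ ∧ (∀ x ∈ X, ∀ y ∈ X, x + y ∈ X) ∧
    ∃ H : AddSubgroup Λ, (H : Set Λ) = X ∩ (-X)

/-- The set `𝒫os(Λ)` of positive subsets of `Λ`. -/
def PosS (Λ : Type*) [AddCommGroup Λ] := {X : Set Λ // IsPositiveSubset X}

/-- The basic set `U(E) = {X ∈ 𝒫os(Λ) | X ∩ E = ∅}`. -/
def UU {Λ : Type*} [AddCommGroup Λ] (E : Set Λ) : Set (PosS Λ) :=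
  {X | X.1 ∩ E = ∅}

/-- A subset of `𝒫os(Λ)` is open iff each of its points lies in some `U(E)`
(`E` finite) contained in it. -/
def IsOpenP {Λ : Type*} [AddCommGroup Λ] (U : Set (PosS Λ)) : Prop :=
  ∀ X ∈ U, ∃ E : Finset Λ, X ∈ UU (E : Set Λ) ∧ UU (E : Set Λ) ⊆ U

/-- Closure in the topology of `𝒫os(Λ)`: points all of whose basic open
neighbourhoods meet `S`. -/
def closureP {Λ : Type*} [AddCommGroup Λ] (S : Set (PosS Λ)) : Set (PosS Λ) :=
  {X | ∀ E : Finset Λ, X ∈ UU (E : Set Λ) → (UU (E : Set Λ) ∩ S).Nonempty}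

/-- The facet equivalence relation attached to the finite hyperplane arrangement
`{H_l | l ∈ 𝔄}`: `X ∼ Y` iff for each `l ∈ 𝔄`, `X` and `Y` lie in the same piece
of `𝒫os(Λ) = U(l) ∪ H_l ∪ U(−l)`. -/
def smileA {Λ : Type*} [AddCommGroup Λ] (𝔄 : Finset Λ) (X Y : PosS Λ) : Prop :=
  ∀ l ∈ 𝔄, ((l ∉ X.1) ↔ (l ∉ Y.1)) ∧
    ((l ∈ X.1 ∧ -l ∈ X.1) ↔ (l ∈ Y.1 ∧ -l ∈ Y.1))

lemma pos_total {Λ : Type*} [AddCommGroup Λ] {S : Set Λ} (h : IsPositiveSubset S)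
    (l : Λ) : l ∈ S ∨ -l ∈ S := by
  have : l ∈ S ∪ (-S) := by rw [h.1]; trivial
  simpa [Set.mem_neg] using this

lemma refine_pos {Λ : Type*} [AddCommGroup Λ] {Z Y : Set Λ}
    (hZ : IsPositiveSubset Z) (hY : IsPositiveSubset Y) :
    IsPositiveSubset ((Z \ -Z) ∪ (Z ∩ -Z ∩ Y)) := by
  obtain ⟨hZu, hZa, HZ, hHZ⟩ := hZ
  obtain ⟨hYu, hYa, HY, hHY⟩ := hY
  have hZor : ∀ l : Λ, l ∈ Z ∨ -l ∈ Z := pos_total ⟨hZu, hZa, HZ, hHZ⟩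
  have hYor : ∀ l : Λ, l ∈ Y ∨ -l ∈ Y := pos_total ⟨hYu, hYa, HY, hHY⟩
  have hstrict : ∀ a b : Λ, a ∈ Z → -a ∉ Z → b ∈ Z → a + b ∈ Z ∧ -(a + b) ∉ Z := by
    intro a b ha hna hb
    refine ⟨hZa a ha b hb, fun h => hna ?_⟩
    have h2 : b + -(a + b) ∈ Z := hZa b hb _ h
    have h3 : b + -(a + b) = -a := by abel
    rwa [h3] at h2
  refine ⟨?_, ?_, HZ ⊓ HY, ?_⟩
  · ext x
    simp only [Set.mem_union, Set.mem_diff, Set.mem_inter_iff, Set.mem_neg, neg_neg,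
      Set.mem_univ, iff_true]
    have := hZor x; have := hYor x
    tauto
  · intro x hx y hy
    simp only [Set.mem_union, Set.mem_diff, Set.mem_inter_iff, Set.mem_neg, neg_neg] at hx hy ⊢
    rcases hx with ⟨hx1, hx2⟩ | ⟨⟨hx1, hx2⟩, hx3⟩ <;>
      rcases hy with ⟨hy1, hy2⟩ | ⟨⟨hy1, hy2⟩, hy3⟩
    · exact Or.inl (hstrict x y hx1 hx2 hy1)
    · exact Or.inl (hstrict x y hx1 hx2 hy1)
    · have := hstrict y x hy1 hy2 hx1
      rw [add_comm] at this; exact Or.inl this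
    · refine Or.inr ⟨⟨hZa x hx1 y hy1, ?_⟩, hYa x hx3 y hy3⟩
      have : -x + -y ∈ Z := hZa _ hx2 _ hy2
      rwa [show -x + -y = -(x+y) by abel] at this
  · have : ((HZ ⊓ HY : AddSubgroup Λ) : Set Λ) = (Z ∩ -Z) ∩ (Y ∩ -Y) := by
      push_cast [AddSubgroup.coe_inf, hHZ, hHY]; rfl
    rw [this]
    ext x
    simp only [Set.mem_inter_iff, Set.mem_union, Set.mem_diff, Set.mem_neg, neg_neg]
    tauto

/-- If `ξ : 𝒫os(Λ) → P` is constant on `𝔄`-facets and reverses the facet closure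
order (`F ⊆ closure F'` implies `ξ(F) ≥ ξ(F')`), then `ξ` is upper semicontinuous:
`{X | ξ(X) < p}` is open for every `p`. -/
theorem stmt19 {Λ : Type*} [AddCommGroup Λ] [Module ℤ Λ] [Module.Free ℤ Λ]
    [Module.Finite ℤ Λ] (𝔄 : Finset Λ) (h0 : (0 : Λ) ∉ 𝔄)
    {P : Type*} [PartialOrder P] (ξ : PosS Λ → P)
    (hconst : ∀ X Y : PosS Λ, smileA 𝔄 X Y → ξ X = ξ Y)
    (hmono : ∀ X Y : PosS Λ,
      {Z : PosS Λ | smileA 𝔄 X Z} ⊆ closureP {Z : PosS Λ | smileA 𝔄 Y Z} →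
      ξ Y ≤ ξ X) :
    ∀ p : P, IsOpenP {X : PosS Λ | ξ X < p} := by
  classical
  intro p X hX
  refine ⟨(𝔄 ∪ 𝔄.image (fun l => -l)).filter (fun l => l ∉ X.1), ?_, ?_⟩
  · show X.1 ∩ _ = ∅
    ext x
    simp only [Set.mem_inter_iff, Finset.coe_filter, Set.mem_setOf_eq,
      Set.mem_empty_iff_false, iff_false, Finset.mem_union, Finset.mem_image, not_and]
    tauto
  · intro Y hY
    have hYE : Y.1 ∩ ↑((𝔄 ∪ 𝔄.image (fun l => -l)).filter (fun l => l ∉ X.1)) = ∅ := hY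
    have hYX : ∀ l ∈ 𝔄, (l ∉ X.1 → l ∉ Y.1) ∧ (-l ∉ X.1 → -l ∉ Y.1) := by
      intro l hl
      constructor
      · intro hx hy
        have : l ∈ (∅ : Set Λ) := by
          rw [← hYE]
          exact ⟨hy, by simp [Finset.mem_filter, Finset.mem_union, hl, hx]⟩
        exact this.elim
      · intro hx hy
        have : -l ∈ (∅ : Set Λ) := by
          rw [← hYE]
          refine ⟨hy, ?_⟩
          simp only [Finset.coe_filter, Set.mem_setOf_eq, Finset.mem_union, Finset.mem_image]
          exact ⟨Or.inr ⟨l, hl, rfl⟩, hx⟩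
        exact this.elim
    show ξ Y < p
    refine lt_of_le_of_lt (hmono X Y ?_) hX
    intro Z hZ E' hZE'
    have hZpos := Z.2
    have hW : IsPositiveSubset ((Z.1 \ -Z.1) ∪ (Z.1 ∩ -Z.1 ∩ Y.1)) := refine_pos Z.2 Y.2
    refine ⟨⟨_, hW⟩, ?_, ?_⟩
    · show ((Z.1 \ -Z.1) ∪ (Z.1 ∩ -Z.1 ∩ Y.1)) ∩ ↑E' = ∅
      have hZE : Z.1 ∩ ↑E' = ∅ := hZE'
      rw [Set.eq_empty_iff_forall_notMem] at hZE ⊢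
      rintro x ⟨hx, hxE⟩
      have hxZ : x ∈ Z.1 := by
        rcases hx with ⟨h, _⟩ | ⟨⟨h, _⟩, _⟩ <;> exact h
      exact hZE x ⟨hxZ, hxE⟩
    · show smileA 𝔄 Y ⟨_, hW⟩
      intro l hl
      obtain ⟨hZ1, hZ2⟩ := hZ l hl
      obtain ⟨hX1, hX2⟩ := hYX l hl
      have hXt := pos_total X.2 l
      have hYt := pos_total Y.2 l
      have hZt := pos_total Z.2 l
      simp only [Set.mem_union, Set.mem_diff, Set.mem_inter_iff, Set.mem_neg, neg_neg]
      by_cases hxl : l ∈ X.1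
      · by_cases hxnl : -l ∈ X.1
        · obtain ⟨hz1, hz2⟩ := hZ2.mp ⟨hxl, hxnl⟩
          simp only [hz1, hz2, not_true, true_and, and_true, false_or, and_false,
            not_false_iff]
        · have hz1 : l ∈ Z.1 := by
            by_contra h
            exact (hZ1.mpr h) hxl
          have hz2 : -l ∉ Z.1 := fun h => hxnl (hZ2.mpr ⟨hz1, h⟩).2
          have hy2 : -l ∉ Y.1 := hX2 hxnl
          have hy1 : l ∈ Y.1 := (pos_total Y.2 l).resolve_right hy2
          simp only [hz1, hz2, hy1, hy2, not_true, not_false_iff, true_and, and_true,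
            and_false, false_and, or_false, false_or]
      · have hz1 : l ∉ Z.1 := hZ1.mp hxl
        have hy1 : l ∉ Y.1 := hX1 hxl
        have hz2 : -l ∈ Z.1 := (pos_total Z.2 l).resolve_left hz1
        have hy2 : -l ∈ Y.1 := (pos_total Y.2 l).resolve_left hy1
        simp only [hz1, hz2, hy1, hy2, not_true, not_false_iff, true_and, and_true,
          and_false, false_and, or_false, false_or]
end
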